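/- arXiv:1708.02307 — 7 statements merged into one kernel-verified Lean document; each statement's English description precedes it below -/
import Mathlib

section
/- There exists a unique T₀ > 0 such that y'(t) < 0 for all t ∈ [0, T₀), y'(T₀) = 0, and y'(t) > 0 for all t ∈ (T₀, ∞). -/
/-- Lemma 1 (part 1): for a convex trajectory `y` with `0 ≤ y'' - L y⁻³ ≤ P y⁻²`, `y(0) = y₀ > 0`
and `y'(0) = y₁ < 0`, there is a unique `T₀ > 0` such that `y' < 0` on `[0, T₀)`, `y'(T₀) = 0`
and `y' > 0` on `(T₀, ∞)`. -/
theorem unique_time_of_minimum (L P y₀ y₁ : ℝ) (hL : 0 < L) (hP : 0 ≤ P)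
    (hy₀ : 0 < y₀) (hy₁ : y₁ < 0)
    (y : ℝ → ℝ) (hy : ContDiff ℝ 2 y) (hypos : ∀ t, 0 ≤ t → 0 < y t)
    (hode : ∀ t, 0 ≤ t →
      0 ≤ deriv (deriv y) t - L / (y t) ^ 3 ∧ deriv (deriv y) t - L / (y t) ^ 3 ≤ P / (y t) ^ 2)
    (h0 : y 0 = y₀) (h0' : deriv y 0 = y₁) :
    ∃! T₀ : ℝ, 0 < T₀ ∧ (∀ t, 0 ≤ t → t < T₀ → deriv y t < 0) ∧ deriv y T₀ = 0 ∧
      (∀ t, T₀ < t → 0 < deriv y t) := by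
  have hy' : ContDiff ℝ (1 + 1) y := hy.of_le (by norm_num)
  obtain ⟨hydiff, -, hyd1⟩ := contDiff_succ_iff_deriv.mp hy'
  have hf_cont : Continuous (deriv y) := hyd1.continuous
  have hf_diff : Differentiable ℝ (deriv y) := hyd1.differentiable one_ne_zero
  -- deriv y is strictly increasing on [0,∞)
  have hmono : StrictMonoOn (deriv y) (Set.Ici 0) := by
    apply strictMonoOn_of_deriv_pos (convex_Ici 0) hf_cont.continuousOn
    intro t ht
    rw [interior_Ici] at ht
    have h1 := (hode t ht.le).1
    have h2 : 0 < L / (y t) ^ 3 := div_pos hL (pow_pos (hypos t ht.le) 3)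
    linarith
  -- there is some t ≥ 0 with deriv y t ≥ 0
  have hex : ∃ t, 0 ≤ t ∧ 0 ≤ deriv y t := by
    by_contra hcon
    push_neg at hcon
    have hneg : ∀ t, 0 ≤ t → deriv y t < 0 := hcon
    have hanti : StrictAntiOn y (Set.Ici 0) := by
      apply strictAntiOn_of_deriv_neg (convex_Ici 0) hydiff.continuous.continuousOn
      intro t ht
      rw [interior_Ici] at ht
      exact hneg t ht.le
    have hle : ∀ t, 0 ≤ t → y t ≤ y₀ := by
      intro t ht
      rcases eq_or_lt_of_le ht with h | h
      · rw [← h, h0]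
      · have := hanti (Set.self_mem_Ici) (Set.mem_Ici.mpr ht) h
        rw [h0] at this; linarith
    set C := L / y₀ ^ 3 with hC
    have hCpos : 0 < C := div_pos hL (pow_pos hy₀ 3)
    have hbound : ∀ t ∈ interior (Set.Ici (0:ℝ)), C ≤ deriv (deriv y) t := by
      intro t ht
      rw [interior_Ici] at ht
      have h1 := (hode t ht.le).1
      have h2 : C ≤ L / (y t) ^ 3 := by
        rw [hC]
        have hyt := hypos t ht.le
        have hyle := hle t ht.le
        gcongr
      linarith
    have htpos : (0:ℝ) < -y₁ / C := div_pos (by linarith) hCpos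
    have hmvt := Convex.mul_sub_le_image_sub_of_le_deriv (convex_Ici 0)
      hf_cont.continuousOn (hf_diff.differentiableOn) hbound
      0 Set.self_mem_Ici (-y₁ / C) (Set.mem_Ici.mpr htpos.le) htpos.le
    rw [h0', sub_zero] at hmvt
    have hlt := hneg _ htpos.le
    have heq : C * (-y₁ / C) = -y₁ := by field_simp
    rw [heq] at hmvt
    linarith
  obtain ⟨t₁, ht₁, ht₁'⟩ := hex
  have ht₁pos : 0 < t₁ := by
    rcases eq_or_lt_of_le ht₁ with h | h
    · rw [← h, h0'] at ht₁'; linarith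
    · exact h
  -- IVT gives T₀
  have hivt : (0:ℝ) ∈ Set.Icc (deriv y 0) (deriv y t₁) := by
    rw [h0']; exact ⟨hy₁.le, ht₁'⟩
  obtain ⟨T₀, hT₀mem, hT₀⟩ := intermediate_value_Icc ht₁ hf_cont.continuousOn hivt
  have hT₀pos : 0 < T₀ := by
    rcases eq_or_lt_of_le hT₀mem.1 with h | h
    · rw [← h, h0'] at hT₀; linarith
    · exact h
  refine ⟨T₀, ⟨hT₀pos, ?_, hT₀, ?_⟩, ?_⟩
  · intro t ht htlt
    have := hmono (Set.mem_Ici.mpr ht) (Set.mem_Ici.mpr hT₀pos.le) htlt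
    rw [hT₀] at this; exact this
  · intro t ht
    have := hmono (Set.mem_Ici.mpr hT₀pos.le) (Set.mem_Ici.mpr (hT₀pos.trans ht).le) ht
    rw [hT₀] at this; exact this
  · rintro T₁ ⟨hT₁pos, hneg₁, hzero₁, hpos₁⟩
    rcases lt_trichotomy T₁ T₀ with h | h | h
    · have := hmono (Set.mem_Ici.mpr hT₁pos.le) (Set.mem_Ici.mpr hT₀pos.le) h
      rw [hT₀, hzero₁] at this; linarith
    · exact h
    · have := hneg₁ T₀ hT₀pos.le h
      rw [hT₀] at this; linarith
end

section
/- Let T₀ > 0 be the unique time at which y'(T₀) = 0 with y' < 0 on [0,T₀), and define y_* = y₀·√((L + P·y₀)/(y₀²·y₁² + L + P·y₀)). Then y(T₀) ≤ y_* and T₀ ≥ (y₀ − y_*)/|y₁|. -/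
/-- Lemma 1 (part 2): with `T₀ > 0` the unique time at which `y'(T₀) = 0` and `y' < 0` on
`[0, T₀)`, and with `y_* = y₀ √((L + P y₀)/(y₀² y₁² + L + P y₀))`, one has `y(T₀) ≤ y_*` and
`T₀ ≥ (y₀ - y_*)/|y₁|`. -/
theorem bound_on_minimum_and_its_time (L P y₀ y₁ : ℝ) (hL : 0 < L) (hP : 0 ≤ P)
    (hy₀ : 0 < y₀) (hy₁ : y₁ < 0)
    (y : ℝ → ℝ) (hy : ContDiff ℝ 2 y) (hypos : ∀ t, 0 ≤ t → 0 < y t)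
    (hode : ∀ t, 0 ≤ t →
      0 ≤ deriv (deriv y) t - L / (y t) ^ 3 ∧ deriv (deriv y) t - L / (y t) ^ 3 ≤ P / (y t) ^ 2)
    (h0 : y 0 = y₀) (h0' : deriv y 0 = y₁)
    (T₀ : ℝ) (hT₀pos : 0 < T₀) (hneg : ∀ t, 0 ≤ t → t < T₀ → deriv y t < 0)
    (hT₀ : deriv y T₀ = 0)
    (ystar : ℝ) (hystar : ystar = y₀ * Real.sqrt ((L + P * y₀) / (y₀ ^ 2 * y₁ ^ 2 + L + P * y₀))) :
    y T₀ ≤ ystar ∧ (y₀ - ystar) / |y₁| ≤ T₀ := by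
  set c : ℝ := L + P * y₀ with hc_def
  have hc : 0 < c := by positivity
  have hdy : Differentiable ℝ y := hy.differentiable (by norm_num)
  have hcd1 : ContDiff ℝ 1 (deriv y) := by
    have h2 : ContDiff ℝ ((1 : ℕ) + 1) y := by exact_mod_cast hy
    exact (contDiff_succ_iff_deriv.mp h2).2.2
  have hd2 : Differentiable ℝ (deriv y) := hcd1.differentiable (by norm_num)
  have hcont_dy : Continuous (deriv y) := hcd1.continuous
  have hmem0 : (0 : ℝ) ∈ Set.Icc (0 : ℝ) T₀ := Set.left_mem_Icc.mpr hT₀pos.le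
  have hmemT : T₀ ∈ Set.Icc (0 : ℝ) T₀ := Set.right_mem_Icc.mpr hT₀pos.le
  have hyT : ∀ t ∈ Set.Icc (0 : ℝ) T₀, 0 < y t := fun t ht => hypos t ht.1
  -- y antitone on [0, T₀]
  have hanti : AntitoneOn y (Set.Icc 0 T₀) := by
    apply antitoneOn_of_deriv_nonpos (convex_Icc _ _) hy.continuous.continuousOn
      hdy.differentiableOn
    intro x hx
    rw [interior_Icc] at hx
    exact (hneg x hx.1.le hx.2).le
  have hyle : ∀ t ∈ Set.Icc (0 : ℝ) T₀, y t ≤ y₀ := by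
    intro t ht
    calc y t ≤ y 0 := hanti hmem0 ht ht.1
    _ = y₀ := h0
  -- key: y'' ≤ c / y³ on [0, T₀]
  have hkey : ∀ t ∈ Set.Icc (0 : ℝ) T₀, deriv (deriv y) t ≤ c / (y t) ^ 3 := by
    intro t ht
    have hyt := hyT t ht
    have h1 := (hode t ht.1).2
    have h2 : P / (y t) ^ 2 ≤ P * y₀ / (y t) ^ 3 := by
      rw [div_le_div_iff₀ (by positivity) (by positivity)]
      have h4 := hyle t ht
      nlinarith [mul_le_mul_of_nonneg_right h4 (sq_nonneg (y t)), sq_nonneg (y t)]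
    have h3 : c / (y t) ^ 3 = L / (y t) ^ 3 + P * y₀ / (y t) ^ 3 := by
      rw [hc_def]; ring
    linarith
  -- energy monotone
  set H : ℝ → ℝ := fun t => (deriv y t) ^ 2 + c / (y t) ^ 2 with hH_def
  have hHderiv : ∀ x, y x ≠ 0 →
      HasDerivAt H (2 * deriv y x * (deriv (deriv y) x - c / (y x) ^ 3)) x := by
    intro x hne
    have hx1 : HasDerivAt (fun t => (deriv y t) ^ 2)
        ((2 : ℕ) * (deriv y x) ^ 1 * deriv (deriv y) x) x := (hd2 x).hasDerivAt.pow 2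
    have hx2 : HasDerivAt (fun t => c / (y t) ^ 2)
        ((0 * (y x) ^ 2 - c * ((2 : ℕ) * (y x) ^ 1 * deriv y x)) / ((y x) ^ 2) ^ 2) x :=
      (hasDerivAt_const x c).div ((hdy x).hasDerivAt.pow 2) (pow_ne_zero _ hne)
    refine (hx1.add hx2).congr_deriv ?_
    field_simp
    ring
  have hHmono : MonotoneOn H (Set.Icc 0 T₀) := by
    apply monotoneOn_of_deriv_nonneg (convex_Icc _ _)
    · apply ContinuousOn.add (hcont_dy.continuousOn.pow 2)
      exact continuousOn_const.div (hy.continuous.continuousOn.pow 2)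
        (fun t ht => pow_ne_zero 2 (hyT t ht).ne')
    · intro x hx
      rw [interior_Icc] at hx
      exact ((hHderiv x (hypos x hx.1.le).ne').differentiableAt).differentiableWithinAt
    · intro x hx
      rw [interior_Icc] at hx
      have hxI : x ∈ Set.Icc (0 : ℝ) T₀ := Set.Ioo_subset_Icc_self hx
      rw [(hHderiv x (hypos x hx.1.le).ne').deriv]
      have h1 : deriv y x < 0 := hneg x hx.1.le hx.2
      have h2 : deriv (deriv y) x - c / (y x) ^ 3 ≤ 0 := by
        have := hkey x hxI; linarith
      nlinarith
  set m : ℝ := y T₀ with hm_def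
  have hmpos : 0 < m := hypos T₀ hT₀pos.le
  set A : ℝ := y₀ ^ 2 * y₁ ^ 2 + c with hA_def
  have hA : 0 < A := by positivity
  have hstarsq : ystar ^ 2 = y₀ ^ 2 * (c / A) := by
    rw [hystar, mul_pow, Real.sq_sqrt (by positivity)]
    congr 1
    rw [hA_def, hc_def]; ring_nf
  have hstarnn : 0 ≤ ystar := by rw [hystar]; positivity
  -- energy inequality
  have hE : y₁ ^ 2 + c / y₀ ^ 2 ≤ c / m ^ 2 := by
    have := hHmono hmem0 hmemT hT₀pos.le
    simp only [hH_def] at this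
    rw [h0, h0', hT₀] at this
    simpa using this
  have hE' : A / y₀ ^ 2 ≤ c / m ^ 2 := by
    have heq : A / y₀ ^ 2 = y₁ ^ 2 + c / y₀ ^ 2 := by
      rw [hA_def]; field_simp
    linarith [heq ▸ hE]
  have hmsq : m ^ 2 ≤ ystar ^ 2 := by
    rw [div_le_div_iff₀ (by positivity) (by positivity)] at hE'
    rw [hstarsq, ← mul_div_assoc, le_div_iff₀ hA]
    nlinarith
  have hpart1 : m ≤ ystar := le_of_pow_le_pow_left₀ two_ne_zero hstarnn hmsq
  refine ⟨hpart1, ?_⟩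
  -- derivative ≥ y₁ on [0, T₀]
  have hdmono : MonotoneOn (deriv y) (Set.Icc 0 T₀) := by
    apply monotoneOn_of_deriv_nonneg (convex_Icc _ _) hcont_dy.continuousOn
      hd2.differentiableOn
    intro x hx
    rw [interior_Icc] at hx
    have h1 := (hode x hx.1.le).1
    have h2 : 0 < L / (y x) ^ 3 := by
      have := hypos x hx.1.le; positivity
    linarith
  have hkmono : MonotoneOn (fun t => y t - y₁ * t) (Set.Icc 0 T₀) := by
    apply monotoneOn_of_deriv_nonneg (convex_Icc _ _)
      ((hy.continuous.sub (continuous_const.mul continuous_id)).continuousOn)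
      ((hdy.sub ((differentiable_id.const_mul y₁))).differentiableOn)
    intro x hx
    rw [interior_Icc] at hx
    have hxI : x ∈ Set.Icc (0 : ℝ) T₀ := Set.Ioo_subset_Icc_self hx
    have hder : HasDerivAt (fun t => y t - y₁ * t) (deriv y x - y₁) x := by
      exact ((hdy x).hasDerivAt.sub ((hasDerivAt_id x).const_mul y₁)).congr_deriv (by ring)
    show 0 ≤ deriv (fun t => y t - y₁ * t) x
    rw [hder.deriv]
    have : y₁ ≤ deriv y x := by
      have := hdmono hmem0 hxI hxI.1
      rwa [h0'] at this
    linarith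
  have hk := hkmono hmem0 hmemT hT₀pos.le
  simp only [mul_zero, sub_zero, h0] at hk
  -- y₀ ≤ y T₀ - y₁ T₀
  have habs : |y₁| = -y₁ := abs_of_neg hy₁
  rw [div_le_iff₀ (abs_pos.mpr hy₁.ne), habs]
  nlinarith
end

section
/- Suppose T₀ > 0 is such that y'(t) ≤ 0 for all t ∈ [0, T₀]. Then for all t ∈ [0, T₀] one has y(t)² ≤ (y₀ + y₁·t)² + (L·y₀⁻² + P·y₀⁻¹)·t². -/
private lemma parabola_aux_sq (L a v H D k q y₀ y₁ : ℝ)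
    (hk0 : 0 ≤ k) (hq0 : 0 ≤ y₁ ^ 2 + q) (hHa : H ≤ a ^ 2)
    (h4 : 4 * a ^ 2 * (y₁ ^ 2 + q + 2 * k) ≤ 4 * a ^ 2 * v ^ 2 + 4 * L + 8 * (k * y₀) * a)
    (hid : D ^ 2 = 4 * (y₁ ^ 2 + q + 2 * k) * H - 4 * L - 4 * k * (y₀ ^ 2 + H)) :
    D ^ 2 ≤ 4 * a ^ 2 * v ^ 2 := by
  nlinarith [h4, hid, mul_nonneg hq0 (by linarith : (0:ℝ) ≤ a ^ 2 - H),
    mul_nonneg hk0 (by linarith : (0:ℝ) ≤ a ^ 2 - H),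
    mul_nonneg hk0 (sq_nonneg (a - y₀))]

private lemma parabola_aux_root (a v D : ℝ) (hD : D < 0) (hav : a * v ≤ 0)
    (hsq : D ^ 2 ≤ 4 * a ^ 2 * v ^ 2) : 0 ≤ D - 2 * (a * v) := by
  by_contra hcon
  push_neg at hcon
  have hsum : D + 2 * (a * v) < 0 := by nlinarith
  have hprod := mul_pos_of_neg_of_neg hcon hsum
  nlinarith [hprod]

/-- Lemma 2: if `y' ≤ 0 on [0, T₀]`, then for all `t ∈ [0, T₀]`,
`y(t)² ≤ (y₀ + y₁ t)² + (L y₀⁻² + P y₀⁻¹) t²`. -/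
theorem parabola_bound_on_decreasing_interval (L P y₀ y₁ : ℝ) (hL : 0 < L) (hP : 0 ≤ P)
    (hy₀ : 0 < y₀) (hy₁ : y₁ < 0)
    (y : ℝ → ℝ) (hy : ContDiff ℝ 2 y) (hypos : ∀ t, 0 ≤ t → 0 < y t)
    (hode : ∀ t, 0 ≤ t →
      0 ≤ deriv (deriv y) t - L / (y t) ^ 3 ∧ deriv (deriv y) t - L / (y t) ^ 3 ≤ P / (y t) ^ 2)
    (h0 : y 0 = y₀) (h0' : deriv y 0 = y₁)
    (T₀ : ℝ) (hT₀pos : 0 < T₀) (hdec : ∀ t ∈ Set.Icc (0 : ℝ) T₀, deriv y t ≤ 0) :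
    ∀ t ∈ Set.Icc (0 : ℝ) T₀,
      (y t) ^ 2 ≤ (y₀ + y₁ * t) ^ 2 + (L * (y₀ ^ 2)⁻¹ + P * y₀⁻¹) * t ^ 2 := by
  have hy1 : Differentiable ℝ y := hy.differentiable two_ne_zero
  have hy2 : Differentiable ℝ (deriv y) := by
    have h : ContDiff ℝ ((1:WithTop ℕ∞)+1) y := by exact_mod_cast hy
    exact (contDiff_succ_iff_deriv.mp h).2.2.differentiable one_ne_zero
  set C : ℝ := L * (y₀ ^ 2)⁻¹ + P * y₀⁻¹ with hCdef
  have hpos : ∀ s ∈ Set.Icc (0:ℝ) T₀, 0 < y s := fun s hs => hypos s hs.1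
  -- derivatives of the basic pieces at points where y is nonzero
  have hD2 : ∀ s : ℝ, HasDerivAt (fun u => (deriv y u) ^ 2)
      (2 * deriv y s * deriv (deriv y) s) s := by
    intro s
    have := ((hy2 s).hasDerivAt).fun_pow 2
    simpa [pow_one] using this
  have hDy2 : ∀ s : ℝ, HasDerivAt (fun u => (y u) ^ 2) (2 * y s * deriv y s) s := by
    intro s
    have := ((hy1 s).hasDerivAt).fun_pow 2
    simpa [pow_one] using this
  have hDLy : ∀ s : ℝ, y s ≠ 0 → HasDerivAt (fun u => L / (y u) ^ 2)
      (-2 * L * deriv y s / (y s) ^ 3) s := by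
    intro s hs
    have h := (hasDerivAt_const s L).fun_div (hDy2 s) (pow_ne_zero 2 hs)
    refine h.congr_deriv ?_
    field_simp
    try ring
  have hDPy : ∀ s : ℝ, y s ≠ 0 → HasDerivAt (fun u => 2 * P / y u)
      (-2 * P * deriv y s / (y s) ^ 2) s := by
    intro s hs
    have h := (hasDerivAt_const s (2 * P)).fun_div ((hy1 s).hasDerivAt) hs
    refine h.congr_deriv ?_
    field_simp
    try ring
  -- Energy B = y'^2 + L/y^2 + 2P/y is monotone (nondecreasing) on [0,T₀]
  set B : ℝ → ℝ := fun s => (deriv y s) ^ 2 + L / (y s) ^ 2 + 2 * P / y s with hBdef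
  have hBDeriv : ∀ s ∈ Set.Ioo (0:ℝ) T₀,
      HasDerivAt B (2 * deriv y s * (deriv (deriv y) s - L / (y s) ^ 3 - P / (y s) ^ 2)) s := by
    intro s hs
    have hsne : y s ≠ 0 := (hypos s hs.1.le).ne'
    have h := ((hD2 s).add (hDLy s hsne)).add (hDPy s hsne)
    refine h.congr_deriv ?_
    field_simp
    try ring
  have hBcont : ContinuousOn B (Set.Icc 0 T₀) := by
    apply ContinuousOn.add
    · apply ContinuousOn.add
      · exact ((hy2.continuous.pow 2)).continuousOn
      · exact continuousOn_const.div ((hy1.continuous.pow 2)).continuousOn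
          (fun s hs => pow_ne_zero 2 (hpos s hs).ne')
    · exact continuousOn_const.div hy1.continuous.continuousOn
        (fun s hs => (hpos s hs).ne')
  have hBmono : MonotoneOn B (Set.Icc 0 T₀) := by
    apply monotoneOn_of_deriv_nonneg (convex_Icc 0 T₀) hBcont
    · intro s hs
      rw [interior_Icc] at hs
      exact ((hBDeriv s hs).differentiableAt).differentiableWithinAt
    · intro s hs
      rw [interior_Icc] at hs
      rw [(hBDeriv s hs).deriv]
      have h1 := hdec s ⟨hs.1.le, hs.2.le⟩
      have h2 := (hode s hs.1.le).2
      have ha : 2 * deriv y s ≤ 0 := by linarith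
      have hb : deriv (deriv y) s - L / (y s) ^ 3 - P / (y s) ^ 2 ≤ 0 := by linarith
      nlinarith [mul_nonneg (neg_nonneg.2 ha) (neg_nonneg.2 hb)]
  have hmem0 : (0:ℝ) ∈ Set.Icc (0:ℝ) T₀ := Set.left_mem_Icc.mpr hT₀pos.le
  have hB0 : B 0 = y₁ ^ 2 + L / y₀ ^ 2 + 2 * P / y₀ := by simp [hBdef, h0, h0']
  -- the comparison function c = parabola - y²
  set c : ℝ → ℝ := fun s => ((y₀ + y₁ * s) ^ 2 + C * s ^ 2) - (y s) ^ 2 with hcdef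
  have hcDeriv : ∀ s : ℝ, HasDerivAt c
      ((2 * y₁ * (y₀ + y₁ * s) + 2 * C * s) - 2 * (y s * deriv y s)) s := by
    intro s
    have h1 : HasDerivAt (fun u : ℝ => y₀ + y₁ * u) y₁ s := by
      simpa using ((hasDerivAt_id s).const_mul y₁).const_add y₀
    have h2 := h1.fun_pow 2
    have h3 : HasDerivAt (fun u : ℝ => C * u ^ 2) (2 * C * s) s := by
      have := ((hasDerivAt_id s).fun_pow 2).const_mul C
      refine this.congr_deriv ?_
      simp
      ring
    have := (h2.add h3).sub (hDy2 s)
    refine this.congr_deriv ?_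
    ring
  have hc0 : c 0 = 0 := by simp [hcdef, h0]
  -- Key: at interior points where c ≤ 0, the derivative of c is nonnegative
  have hKey : ∀ s ∈ Set.Ioo (0:ℝ) T₀, c s ≤ 0 →
      0 ≤ (2 * y₁ * (y₀ + y₁ * s) + 2 * C * s) - 2 * (y s * deriv y s) := by
    intro s hs hcs
    simp only [hcdef] at hcs
    have hsIcc : s ∈ Set.Icc (0:ℝ) T₀ := ⟨hs.1.le, hs.2.le⟩
    have ha : 0 < y s := hpos s hsIcc
    have hv : deriv y s ≤ 0 := hdec s hsIcc
    have hav : y s * deriv y s ≤ 0 := mul_nonpos_of_nonneg_of_nonpos ha.le hv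
    rcases le_or_gt 0 (2 * y₁ * (y₀ + y₁ * s) + 2 * C * s) with hD | hD
    · linarith
    · -- need (2 y v)² ≥ D² where D = h' < 0
      have hB := hBmono hmem0 hsIcc hs.1.le
      rw [hB0] at hB
      simp only [hBdef] at hB
      have ha0 : y s ≠ 0 := ha.ne'
      have hy₀0 : y₀ ≠ 0 := hy₀.ne'
      set a := y s with hadef
      set v := deriv y s with hvdef
      set H := (y₀ + y₁ * s) ^ 2 + C * s ^ 2 with hHdef
      set D := 2 * y₁ * (y₀ + y₁ * s) + 2 * C * s with hDdef
      have hHa : H ≤ a ^ 2 := by linarith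
      -- clear denominators in the energy inequality
      set k := P / y₀ with hkdef
      set q := L / y₀ ^ 2 with hqdef
      have hk0 : 0 ≤ k := div_nonneg hP hy₀.le
      have hkP : k * y₀ = P := by rw [hkdef]; field_simp
      have hq0 : 0 ≤ y₁ ^ 2 + q := by positivity
      have hB' : y₁ ^ 2 + q + 2 * k ≤ v ^ 2 + L / a ^ 2 + 2 * P / a := by
        have e : 2 * P / y₀ = 2 * k := by rw [hkdef]; ring
        linarith [e ▸ hB]
      have h4 : 4 * a ^ 2 * (y₁ ^ 2 + q + 2 * k)
          ≤ 4 * a ^ 2 * v ^ 2 + 4 * L + 8 * (k * y₀) * a := by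
        have hm := mul_le_mul_of_nonneg_left hB' (by positivity : (0:ℝ) ≤ 4 * a ^ 2)
        have e1 : 4 * a ^ 2 * (L / a ^ 2) = 4 * L := by field_simp
        have e2 : 4 * a ^ 2 * (2 * P / a) = 8 * (k * y₀) * a := by
          rw [hkP]; field_simp; ring
        have e3 : 4 * a ^ 2 * (v ^ 2 + L / a ^ 2 + 2 * P / a)
            = 4 * a ^ 2 * v ^ 2 + 4 * L + 8 * (k * y₀) * a := by
          rw [mul_add, mul_add, e1, e2]
        rw [e3] at hm
        exact hm
      -- algebraic identity for D² in terms of H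
      have hid : D ^ 2 = 4 * (y₁ ^ 2 + q + 2 * k) * H - 4 * L
          - 4 * k * (y₀ ^ 2 + H) := by
        rw [hDdef, hHdef, hCdef, hkdef, hqdef]
        field_simp
        ring
      clear_value a v H D k q
      have hsq := parabola_aux_sq L a v H D k q y₀ y₁ hk0 hq0 hHa h4 hid
      exact parabola_aux_root a v D hD hav hsq
  -- first-crossing argument : c ≥ 0 on [0, T₀]
  intro t ht
  suffices hct : 0 ≤ c t by
    simp only [hcdef] at hct
    linarith
  by_contra hneg
  push_neg at hneg
  set G : Set ℝ := {s | s ∈ Set.Icc 0 t ∧ 0 ≤ c s} with hGdef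
  have hG0 : (0:ℝ) ∈ G := ⟨⟨le_refl 0, ht.1⟩, hc0.ge⟩
  have hGne : G.Nonempty := ⟨0, hG0⟩
  have hGbdd : BddAbove G := ⟨t, fun s hs => hs.1.2⟩
  have hccont : Continuous c := by
    apply Continuous.sub
    · exact ((continuous_const.add (continuous_const.mul continuous_id)).pow 2).add
        (continuous_const.mul (continuous_id.pow 2))
    · exact hy1.continuous.pow 2
  have hGclosed : IsClosed G := by
    have : G = Set.Icc 0 t ∩ c ⁻¹' Set.Ici 0 := by
      ext s
      simp [hGdef]
    rw [this]
    exact isClosed_Icc.inter (isClosed_Ici.preimage hccont)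
  set τ := sSup G with hτdef
  have hτG : τ ∈ G := hGclosed.csSup_mem hGne hGbdd
  have hτ0 : 0 ≤ τ := hτG.1.1
  have hτt : τ ≤ t := hτG.1.2
  have hcτ : 0 ≤ c τ := hτG.2
  have hτlt : τ < t := by
    rcases lt_or_eq_of_le hτt with h | h
    · exact h
    · exact absurd (h ▸ hcτ) (not_le.2 hneg)
  have hupper : ∀ s, τ < s → s ≤ t → c s < 0 := by
    intro s h1 h2
    by_contra h
    push_neg at h
    have hsG : s ∈ G := ⟨⟨le_trans hτ0 h1.le, h2⟩, h⟩
    exact absurd (le_csSup hGbdd hsG) (not_le.2 h1)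
  have hmono : MonotoneOn c (Set.Icc τ t) := by
    apply monotoneOn_of_deriv_nonneg (convex_Icc τ t)
    · exact fun s _ => (hcDeriv s).differentiableAt.continuousAt.continuousWithinAt
    · exact fun s _ => (hcDeriv s).differentiableAt.differentiableWithinAt
    · intro s hs
      rw [interior_Icc] at hs
      rw [(hcDeriv s).deriv]
      exact hKey s ⟨lt_of_le_of_lt hτ0 hs.1, lt_of_lt_of_le hs.2 ht.2⟩
        (hupper s hs.1 hs.2.le).le
  have hle := hmono (Set.left_mem_Icc.2 hτlt.le) (Set.right_mem_Icc.2 hτlt.le) hτlt.le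
  linarith
end

section
/- Suppose T₀ > 0 is such that y'(t) ≤ 0 for all t ∈ [0, T₀]. Then for all t ∈ [0, T₀] one has the energy-type inequality y'(t)² + L·y(t)⁻² + 2P·y(t)⁻¹ ≥ y₁² + L·y₀⁻² + 2P·y₀⁻¹. -/
/-- The energy-type inequality: if `y' ≤ 0` on `[0, T₀]`, then for all `t ∈ [0, T₀]`,
`y'(t)² + L y(t)⁻² + 2P y(t)⁻¹ ≥ y₁² + L y₀⁻² + 2P y₀⁻¹`. -/
theorem energy_inequality_on_decreasing_interval (L P y₀ y₁ : ℝ) (hL : 0 < L) (hP : 0 ≤ P)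
    (hy₀ : 0 < y₀) (hy₁ : y₁ < 0)
    (y : ℝ → ℝ) (hy : ContDiff ℝ 2 y) (hypos : ∀ t, 0 ≤ t → 0 < y t)
    (hode : ∀ t, 0 ≤ t →
      0 ≤ deriv (deriv y) t - L / (y t) ^ 3 ∧ deriv (deriv y) t - L / (y t) ^ 3 ≤ P / (y t) ^ 2)
    (h0 : y 0 = y₀) (h0' : deriv y 0 = y₁)
    (T₀ : ℝ) (hT₀pos : 0 < T₀) (hdec : ∀ t ∈ Set.Icc (0 : ℝ) T₀, deriv y t ≤ 0) :
    ∀ t ∈ Set.Icc (0 : ℝ) T₀,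
      y₁ ^ 2 + L * (y₀ ^ 2)⁻¹ + 2 * P * y₀⁻¹ ≤
        (deriv y t) ^ 2 + L * ((y t) ^ 2)⁻¹ + 2 * P * (y t)⁻¹ := by
  intro t ht
  set E : ℝ → ℝ := fun s => (deriv y s) ^ 2 + L * ((y s) ^ 2)⁻¹ + 2 * P * (y s)⁻¹ with hEdef
  have hy1 : Differentiable ℝ y := hy.differentiable (by norm_num)
  have hy2' : ContDiff ℝ 1 (deriv y) := by
    have h2 : ContDiff ℝ ((1 : ℕ∞) + 1) y := by norm_num; exact hy
    exact (contDiff_succ_iff_deriv.mp h2).2.2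
  have hy2 : Differentiable ℝ (deriv y) := hy2'.differentiable (by norm_num)
  have key : ∀ s ∈ Set.Ioo (0:ℝ) T₀, HasDerivAt E
      ((2 * deriv y s ^ 1 * deriv (deriv y) s
        + L * (-(2 * y s ^ 1 * deriv y s) / ((y s) ^ 2) ^ 2))
        + 2 * P * (-(deriv y s) / (y s) ^ 2)) s := by
    intro s hs
    have hys : y s ≠ 0 := (hypos s hs.1.le).ne'
    have h1 : HasDerivAt (fun u => (deriv y u) ^ 2)
        (2 * deriv y s ^ 1 * deriv (deriv y) s) s := ((hy2 s).hasDerivAt).pow 2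
    have h2 : HasDerivAt (fun u => ((y u) ^ 2)⁻¹)
        (-(2 * y s ^ 1 * deriv y s) / ((y s) ^ 2) ^ 2) s :=
      (((hy1 s).hasDerivAt).pow 2).inv (pow_ne_zero 2 hys)
    have h3 : HasDerivAt (fun u => (y u)⁻¹) (-(deriv y s) / (y s) ^ 2) s :=
      ((hy1 s).hasDerivAt).inv hys
    exact (h1.add (h2.const_mul L)).add (h3.const_mul (2 * P))
  have hcont : ContinuousOn E (Set.Icc 0 T₀) := by
    apply ContinuousOn.add
    apply ContinuousOn.add
    · exact (hy2.continuous.pow 2).continuousOn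
    · exact continuousOn_const.mul (((hy1.continuous.pow 2).continuousOn).inv₀
        fun s hs => pow_ne_zero 2 (hypos s hs.1).ne')
    · exact continuousOn_const.mul ((hy1.continuous.continuousOn).inv₀
        fun s hs => (hypos s hs.1).ne')
  have hmono : MonotoneOn E (Set.Icc 0 T₀) := by
    apply monotoneOn_of_deriv_nonneg (convex_Icc 0 T₀) hcont
    · intro s hs
      rw [interior_Icc] at hs
      exact ((key s hs).differentiableAt).differentiableWithinAt
    · intro s hs
      rw [interior_Icc] at hs
      rw [(key s hs).deriv]
      have hys : 0 < y s := hypos s hs.1.le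
      have hu : deriv y s ≤ 0 := hdec s ⟨hs.1.le, hs.2.le⟩
      obtain ⟨hd1, hd2⟩ := hode s hs.1.le
      set u := deriv y s
      set d := deriv (deriv y) s
      have hprod : u * (P / (y s) ^ 2 - (d - L / (y s) ^ 3)) ≤ 0 :=
        mul_nonpos_of_nonpos_of_nonneg hu (by linarith)
      have hexpr : (2 * u ^ 1 * d + L * (-(2 * y s ^ 1 * u) / ((y s) ^ 2) ^ 2))
          + 2 * P * (-u / (y s) ^ 2)
          = 2 * (u * (d - L / (y s) ^ 3)) - 2 * (u * (P / (y s) ^ 2))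
            + 2 * (u * (P / (y s) ^ 2) - u * (P / (y s) ^ 2)) := by
        field_simp
        ring
      rw [hexpr]
      nlinarith [hprod]
  have h0mem : (0 : ℝ) ∈ Set.Icc (0:ℝ) T₀ := ⟨le_rfl, hT₀pos.le⟩
  have := hmono h0mem ht ht.1
  simpa [hEdef, h0, h0'] using this
end

section
/- Suppose T₀ > 0 is such that y'(t) ≤ 0 for all t ∈ [0, T₀]. Then for all t ∈ [0, T₀] one has y'(t)² ≥ y₁² + (L + P·y₀)·(y₀⁻² − y(t)⁻²). -/
/-- If `y' ≤ 0` on `[0, T₀]`, then for all `t ∈ [0, T₀]`,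
`y'(t)² ≥ y₁² + (L + P y₀)(y₀⁻² − y(t)⁻²)`. -/
theorem velocity_lower_bound_on_decreasing_interval (L P y₀ y₁ : ℝ) (hL : 0 < L) (hP : 0 ≤ P)
    (hy₀ : 0 < y₀) (hy₁ : y₁ < 0)
    (y : ℝ → ℝ) (hy : ContDiff ℝ 2 y) (hypos : ∀ t, 0 ≤ t → 0 < y t)
    (hode : ∀ t, 0 ≤ t →
      0 ≤ deriv (deriv y) t - L / (y t) ^ 3 ∧ deriv (deriv y) t - L / (y t) ^ 3 ≤ P / (y t) ^ 2)
    (h0 : y 0 = y₀) (h0' : deriv y 0 = y₁)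
    (T₀ : ℝ) (hT₀pos : 0 < T₀) (hdec : ∀ t ∈ Set.Icc (0 : ℝ) T₀, deriv y t ≤ 0) :
    ∀ t ∈ Set.Icc (0 : ℝ) T₀,
      y₁ ^ 2 + (L + P * y₀) * ((y₀ ^ 2)⁻¹ - ((y t) ^ 2)⁻¹) ≤ (deriv y t) ^ 2 := by
  set C := L + P * y₀ with hC
  have hCpos : 0 < C := by nlinarith
  have hyd : Differentiable ℝ y := hy.differentiable (by norm_num)
  have hy2 : ContDiff ℝ (1 + 1) y := by norm_num; exact hy
  have hyd' : Differentiable ℝ (deriv y) :=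
    ((contDiff_succ_iff_deriv.mp hy2).2.2).differentiable (by norm_num)
  -- y is antitone on [0, T₀]
  have hanti : AntitoneOn y (Set.Icc 0 T₀) := by
    apply antitoneOn_of_deriv_nonpos (convex_Icc 0 T₀) hyd.continuous.continuousOn
      (fun x _ => (hyd x).differentiableWithinAt)
    intro x hx
    rw [interior_Icc] at hx
    exact hdec x ⟨le_of_lt hx.1, le_of_lt hx.2⟩
  -- the energy function
  set g : ℝ → ℝ := fun t => (deriv y t) ^ 2 + C * ((y t) ^ 2)⁻¹ with hg
  have hder : ∀ x : ℝ, 0 ≤ x → HasDerivAt g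
      (2 * deriv y x ^ 1 * deriv (deriv y) x +
        C * (-(2 * y x ^ 1 * deriv y x) / ((y x) ^ 2) ^ 2)) x := by
    intro x hx
    have hu : 0 < y x := hypos x hx
    have h1 : HasDerivAt (fun t => (deriv y t) ^ 2)
        (2 * deriv y x ^ 1 * deriv (deriv y) x) x := by
      simpa using ((hyd' x).hasDerivAt).fun_pow 2
    have h2 : HasDerivAt (fun t => ((y t) ^ 2)⁻¹)
        (-(2 * y x ^ 1 * deriv y x) / ((y x) ^ 2) ^ 2) x := by
      have := (((hyd x).hasDerivAt).fun_pow 2).fun_inv (pow_ne_zero 2 hu.ne')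
      simpa using this
    exact h1.add (h2.const_mul C)
  -- g is monotone on [0, T₀]
  have hmono : MonotoneOn g (Set.Icc 0 T₀) := by
    apply monotoneOn_of_deriv_nonneg (convex_Icc 0 T₀)
    · exact ContinuousOn.congr (fun x hx => ((hder x hx.1).continuousAt).continuousWithinAt)
        (fun x hx => rfl) |>.mono (le_refl _)
    · intro x hx
      rw [interior_Icc] at hx
      exact ((hder x hx.1.le).differentiableAt).differentiableWithinAt
    · intro x hx
      rw [interior_Icc] at hx
      have hx0 : (0:ℝ) ≤ x := hx.1.le
      rw [(hder x hx0).deriv]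
      set a := deriv y x
      set d2 := deriv (deriv y) x
      set u := y x with hu
      have hupos : 0 < u := hypos x hx0
      have ha : a ≤ 0 := hdec x ⟨hx0, hx.2.le⟩
      have huy₀ : u ≤ y₀ := by
        have := hanti (Set.left_mem_Icc.mpr hT₀pos.le) ⟨hx0, hx.2.le⟩ hx.1.le
        rwa [h0] at this
      have hode2 := (hode x hx0).2
      have hd2 : d2 * u ^ 3 ≤ L + P * u := by
        rw [sub_le_iff_le_add] at hode2
        have h3 : (0:ℝ) < u ^ 3 := by positivity
        rw [← le_div_iff₀ h3]
        calc d2 ≤ P / u ^ 2 + L / u ^ 3 := hode2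
          _ = (L + P * u) / u ^ 3 := by field_simp; ring
      have hkey : 2 * a ^ 1 * d2 + C * (-(2 * u ^ 1 * a) / (u ^ 2) ^ 2)
          = (2 * a) * (d2 - C / u ^ 3) := by
        field_simp
        ring
      rw [hkey]
      have hfac : d2 - C / u ^ 3 ≤ 0 := by
        rw [sub_nonpos, le_div_iff₀ (by positivity : (0:ℝ) < u ^ 3)]
        nlinarith
      nlinarith [mul_nonneg (neg_nonneg.mpr (show 2*a ≤ 0 by linarith))
        (neg_nonneg.mpr hfac)]
  intro t ht
  have h0mem : (0:ℝ) ∈ Set.Icc (0:ℝ) T₀ := Set.left_mem_Icc.mpr hT₀pos.le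
  have := hmono h0mem ht ht.1
  simp only [hg, h0, h0'] at this
  linarith
end

section
/- Under the stated parameter choices and support conditions, every such trajectory y satisfies y'(t) ≤ 0 for all t ∈ [0, T], where T = a₀·ε² − 20·ε⁴. -/
set_option maxHeartbeats 1000000

private lemma traj_aux_final (a₀ ε r : ℝ) (ha₀ : 0 < a₀) (hε0 : 0 < ε) (hε1 : ε < 1)
    (hrlo : a₀ - ε ^ 3 < r)
    (h : (r - 4 * ε ^ 2) * (a₀ * ε ^ 2) < (r + 2 * ε ^ 3) * (a₀ * ε ^ 2 - 20 * ε ^ 4)) :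
    False := by
  have h' : 20 * (r * ε ^ 4) + 40 * ε ^ 7 < 4 * (a₀ * ε ^ 4) + 2 * (a₀ * ε ^ 5) := by
    nlinarith [h]
  have f1 : (a₀ - ε ^ 3) * ε ^ 4 < r * ε ^ 4 :=
    mul_lt_mul_of_pos_right hrlo (by positivity)
  have f2 : a₀ * ε ^ 5 ≤ a₀ * ε ^ 4 := by
    apply mul_le_mul_of_nonneg_left _ ha₀.le
    calc ε ^ 5 = ε ^ 4 * ε := by ring
      _ ≤ ε ^ 4 * 1 := by
          apply mul_le_mul_of_nonneg_left hε1.le (by positivity)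
      _ = ε ^ 4 := by ring
  have f3 : (0:ℝ) < ε ^ 7 := by positivity
  have f4 : (0:ℝ) < a₀ * ε ^ 4 := by positivity
  nlinarith [h', f1, f2, f3, f4]

private lemma traj_aux_small (a₀ ε r ℓ : ℝ) (ha₀ : 0 < a₀) (hε0 : 0 < ε) (hε1 : ε < 1)
    (hε2 : ε ^ 2 < a₀ / 20) (hε3 : ε ^ 3 < a₀ / 20)
    (hrlo : a₀ - ε ^ 3 < r) (hrhi : r < a₀ + ε ^ 3) (hr : 0 < r)
    (hl : ℓ * a₀ ^ 2 < r ^ 2 * ε ^ 2)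
    (hk : 16 * (r - ε ^ 3) ^ 2 < ℓ * a₀ ^ 2 + 64 * a₀ * ε ^ 2) : False := by
  have hε21 : ε ^ 2 ≤ 1 := by nlinarith
  have h9 : 9 / 10 * a₀ ≤ r - ε ^ 3 := by linarith
  have hA : (9 / 10 * a₀) ^ 2 ≤ (r - ε ^ 3) ^ 2 :=
    pow_le_pow_left₀ (by positivity) h9 2
  have hr21 : r ≤ 21 / 20 * a₀ := by linarith
  have hB : r ^ 2 * ε ^ 2 ≤ (21 / 20 * a₀) ^ 2 * 1 := by
    apply mul_le_mul (pow_le_pow_left₀ hr.le hr21 2) hε21 (by positivity) (by positivity)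
  have hC : 64 * a₀ * ε ^ 2 ≤ 64 * a₀ * (a₀ / 20) :=
    mul_le_mul_of_nonneg_left hε2.le (by positivity)
  nlinarith [hA, hB, hC, hk, hl, mul_pos ha₀ ha₀]

private lemma traj_aux_num (a₀ ε r u X : ℝ) (hε0 : 0 < ε) (hr : 0 < r)
    (hu1 : u < r + ε ^ 3) (hupos : 0 < u)
    (hX : X < ε ^ 6) (hXnn : 0 ≤ X) :
    u ^ 2 + X ≤ (r + 2 * ε ^ 3) ^ 2 := by
  have hA : u ^ 2 ≤ (r + ε ^ 3) ^ 2 := pow_le_pow_left₀ hupos.le hu1.le 2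
  nlinarith [mul_pos hr (pow_pos hε0 3), pow_pos hε0 6]

/-- Theorem 1 parameter choices: every trajectory starting on the support of the data satisfies
`y'(t) ≤ 0` for all `t ∈ [0, T]`, where `T = a₀ ε² − 20 ε⁴`. -/
theorem trajectory_decreasing_up_to_time_T (a₀ ε a₁ δ T : ℝ) (ha₀ : 0 < a₀) (hε0 : 0 < ε)
    (hε1 : ε < min 1 (a₀ / 4)) (hε2 : ε ^ 2 < a₀ / 20)
    (ha₁ : a₁ = -(ε ^ 2)⁻¹) (hδ : δ = ε ^ 3) (hT : T = a₀ * ε ^ 2 - 20 * ε ^ 4)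
    (r w ℓ : ℝ) (hr : 0 < r) (hℓ : 0 < ℓ)
    (hsupp : (r + (a₀ / |a₁|) * w) ^ 2 + ℓ * (r ^ 2)⁻¹ * (a₀ / a₁) ^ 2 < ε ^ 2 / a₁ ^ 2)
    (hshell : a₀ - δ < r ∧ r < a₀ + δ)
    (y : ℝ → ℝ) (hy : ContDiff ℝ 2 y) (hypos : ∀ t, 0 ≤ t → 0 < y t)
    (hode : ∀ t, 0 ≤ t → 0 ≤ deriv (deriv y) t - ℓ / (y t) ^ 3 ∧
      deriv (deriv y) t - ℓ / (y t) ^ 3 ≤ (8 / a₀) / (y t) ^ 2)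
    (h0 : y 0 = r) (h0' : deriv y 0 = w) :
    ∀ t ∈ Set.Icc (0 : ℝ) T, deriv y t ≤ 0 := by
  have hεne : ε ≠ 0 := hε0.ne'
  have hε1' : ε < 1 := lt_of_lt_of_le hε1 (min_le_left _ _)
  have hε2pos : (0:ℝ) < ε ^ 2 := by positivity
  have hε3 : ε ^ 3 < a₀ / 20 := by nlinarith
  have hrlo : a₀ - ε ^ 3 < r := by rw [hδ] at hshell; exact hshell.1
  have hrhi : r < a₀ + ε ^ 3 := by rw [hδ] at hshell; exact hshell.2
  -- rewrite the support condition
  have e1 : a₀ / |a₁| = a₀ * ε ^ 2 := by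
    rw [ha₁, abs_neg, abs_inv, abs_of_pos hε2pos]; field_simp
  have e2 : (a₀ / a₁) ^ 2 = a₀ ^ 2 * ε ^ 4 := by
    rw [ha₁]; field_simp
  have e3 : ε ^ 2 / a₁ ^ 2 = ε ^ 6 := by
    rw [ha₁]; field_simp
  rw [e1, e2, e3] at hsupp
  have hr2 : (0:ℝ) < r ^ 2 := by positivity
  have hw2 : (r + a₀ * ε ^ 2 * w) ^ 2 < (ε ^ 3) ^ 2 := by
    have hpos : 0 < ℓ * (r ^ 2)⁻¹ * (a₀ ^ 2 * ε ^ 4) := by positivity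
    have he : (ε ^ 3) ^ 2 = ε ^ 6 := by ring
    linarith
  have hl4 : ℓ * (r ^ 2)⁻¹ * (a₀ ^ 2 * ε ^ 4) < ε ^ 6 := by
    nlinarith [sq_nonneg (r + a₀ * ε ^ 2 * w)]
  obtain ⟨habs1, habs2⟩ := abs_lt_of_sq_lt_sq' hw2 (by positivity)
  -- u = a₀ ε² (-w)
  set u : ℝ := a₀ * ε ^ 2 * (-w) with hudef
  have hu1 : u < r + ε ^ 3 := by simp only [hudef]; linarith
  have hu2 : r - ε ^ 3 < u := by simp only [hudef]; linarith
  have hrε : ε ^ 3 < r := by linarith [pow_pos hε0 3]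
  have hupos : 0 < u := by linarith
  have hwneg : w < 0 := by
    by_contra h
    push_neg at h
    have h1 : 0 ≤ a₀ * ε ^ 2 * w := mul_nonneg (by positivity) h
    have : u ≤ 0 := by simp only [hudef]; linarith
    linarith
  have huw : u ^ 2 = a₀ ^ 2 * ε ^ 4 * w ^ 2 := by simp only [hudef]; ring
  -- ℓ * a₀ ^ 2 < r ^ 2 * ε ^ 2
  have hl : ℓ * a₀ ^ 2 < r ^ 2 * ε ^ 2 := by
    have h5 : ℓ * (a₀ ^ 2 * ε ^ 4) < ε ^ 6 * r ^ 2 := by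
      have h5' := mul_lt_mul_of_pos_right hl4 hr2
      have he : ℓ * (r ^ 2)⁻¹ * (a₀ ^ 2 * ε ^ 4) * r ^ 2 = ℓ * (a₀ ^ 2 * ε ^ 4) := by
        field_simp
      linarith [he ▸ h5']
    have h7 : ℓ * a₀ ^ 2 * ε ^ 4 < r ^ 2 * ε ^ 2 * ε ^ 4 := by ring_nf; ring_nf at h5; linarith
    exact lt_of_mul_lt_mul_right h7 (by positivity)
  -- setup
  intro t ht
  by_contra hcon
  push_neg at hcon
  have hyd : Differentiable ℝ y := hy.differentiable (by norm_num)
  have h2 : ContDiff ℝ 1 (deriv y) :=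
    (contDiff_succ_iff_deriv.mp (show ContDiff ℝ (1+1) y by norm_num; exact hy)).2.2
  have hdyd : Differentiable ℝ (deriv y) := h2.differentiable one_ne_zero
  have hcy' : Continuous (deriv y) := hdyd.continuous
  -- first zero of y'
  set S : Set ℝ := Set.Icc 0 t ∩ {s | 0 ≤ deriv y s} with hSdef
  have hSne : S.Nonempty := ⟨t, ⟨ht.1, le_rfl⟩, hcon.le⟩
  have hSbdd : BddBelow S := ⟨0, fun s hs => hs.1.1⟩
  have hSc : IsClosed S := isClosed_Icc.inter (isClosed_le continuous_const hcy')
  set c := sInf S with hcdef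
  have hcS : c ∈ S := hSc.csInf_mem hSne hSbdd
  have hc0 : 0 ≤ c := hcS.1.1
  have hct : c ≤ t := hcS.1.2
  have hcT : c ≤ T := le_trans hct ht.2
  have hcd : 0 ≤ deriv y c := hcS.2
  have hneg : ∀ s, 0 ≤ s → s < c → deriv y s < 0 := by
    intro s hs0 hsc
    by_contra h
    push_neg at h
    have hsS : s ∈ S := ⟨⟨hs0, le_trans hsc.le hct⟩, h⟩
    exact absurd (csInf_le hSbdd hsS) (not_le.mpr hsc)
  have hcpos : 0 < c := by
    rcases hc0.lt_or_eq with h | h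
    · exact h
    · exfalso; rw [← h, h0'] at hcd; exact absurd hcd (not_le.mpr hwneg)
  have hczero : deriv y c = 0 := by
    refine le_antisymm ?_ hcd
    by_contra h
    push_neg at h
    have h3 : ∀ᶠ s in nhds c, 0 < deriv y s := (hcy'.tendsto c).eventually (eventually_gt_nhds h)
    have h4 : ∀ᶠ s in nhds c, 0 < s := eventually_gt_nhds hcpos
    have h5 : ∀ᶠ s in nhdsWithin c (Set.Iio c), 0 < deriv y s ∧ 0 < s :=
      ((h3.and h4).filter_mono nhdsWithin_le_nhds)
    obtain ⟨s, hs, hs'⟩ := (h5.and (eventually_mem_nhdsWithin)).exists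
    exact absurd hs.1 (not_lt.mpr (hneg s hs.2.le hs').le)
  have hy'le : ∀ s ∈ Set.Icc (0:ℝ) c, deriv y s ≤ 0 := by
    intro s hs
    rcases hs.2.lt_or_eq with h | h
    · exact (hneg s hs.1 h).le
    · rw [h, hczero]
  -- energy functionals
  set E : ℝ → ℝ := fun s => (deriv y s) ^ 2 + ℓ * ((y s) ^ 2)⁻¹ with hEdef
  set F : ℝ → ℝ := fun s => E s + (16 / a₀) * (y s)⁻¹ with hFdef
  have hyne : ∀ s : ℝ, 0 ≤ s → y s ≠ 0 := fun s hs => (hypos s hs).ne'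
  have hEderiv : ∀ s : ℝ, 0 ≤ s → HasDerivAt E
      (2 * deriv y s * deriv (deriv y) s
        + ℓ * (-(2 * y s * deriv y s) / ((y s) ^ 2) ^ 2)) s := by
    intro s hs
    have h1 : HasDerivAt (fun u => (deriv y u) ^ 2) (2 * deriv y s * deriv (deriv y) s) s := by
      have := ((hdyd s).hasDerivAt).pow 2
      norm_num at this
      convert this using 1
      try ring
      all_goals rfl
    have h2' : HasDerivAt (fun u => (y u) ^ 2) (2 * y s * deriv y s) s := by
      have := ((hyd s).hasDerivAt).pow 2
      norm_num at this
      convert this using 1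
      try ring
      all_goals rfl
    have h3 : HasDerivAt (fun u => (((y u) ^ 2))⁻¹) (-(2 * y s * deriv y s) / ((y s) ^ 2) ^ 2) s :=
      h2'.inv (pow_ne_zero 2 (hyne s hs))
    exact h1.add (h3.const_mul ℓ)
  have hFderiv : ∀ s : ℝ, 0 ≤ s → HasDerivAt F
      (2 * deriv y s * deriv (deriv y) s
        + ℓ * (-(2 * y s * deriv y s) / ((y s) ^ 2) ^ 2)
        + (16 / a₀) * (-(deriv y s) / (y s) ^ 2)) s := by
    intro s hs
    have h3 : HasDerivAt (fun u => (y u)⁻¹) (-(deriv y s) / (y s) ^ 2) s :=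
      ((hyd s).hasDerivAt).inv (hyne s hs)
    exact (hEderiv s hs).add (h3.const_mul (16 / a₀))
  have hinterior : interior (Set.Icc (0:ℝ) c) = Set.Ioo 0 c := interior_Icc
  -- E is antitone on [0, c]
  have hEanti : AntitoneOn E (Set.Icc (0:ℝ) c) := by
    apply antitoneOn_of_deriv_nonpos (convex_Icc 0 c)
    · intro s hs
      exact ((hEderiv s hs.1).differentiableAt).continuousAt.continuousWithinAt
    · intro s hs
      rw [hinterior] at hs
      exact ((hEderiv s hs.1.le).differentiableAt).differentiableWithinAt
    · intro s hs
      rw [hinterior] at hs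
      rw [(hEderiv s hs.1.le).deriv]
      have hys := hypos s hs.1.le
      have hq := (hode s hs.1.le).1
      have hy' := hy'le s ⟨hs.1.le, hs.2.le⟩
      have key : 2 * deriv y s * deriv (deriv y) s + ℓ * (-(2 * y s * deriv y s) / ((y s) ^ 2) ^ 2)
          = 2 * deriv y s * (deriv (deriv y) s - ℓ / (y s) ^ 3) := by
        field_simp
        ring
      rw [key]
      exact mul_nonpos_of_nonpos_of_nonneg (by linarith) hq
  -- F is monotone on [0, c]
  have hFmono : MonotoneOn F (Set.Icc (0:ℝ) c) := by
    apply monotoneOn_of_deriv_nonneg (convex_Icc 0 c)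
    · intro s hs
      exact ((hFderiv s hs.1).differentiableAt).continuousAt.continuousWithinAt
    · intro s hs
      rw [hinterior] at hs
      exact ((hFderiv s hs.1.le).differentiableAt).differentiableWithinAt
    · intro s hs
      rw [hinterior] at hs
      rw [(hFderiv s hs.1.le).deriv]
      have hys := hypos s hs.1.le
      have hq2 := (hode s hs.1.le).2
      have hy' := hy'le s ⟨hs.1.le, hs.2.le⟩
      have key : 2 * deriv y s * deriv (deriv y) s + ℓ * (-(2 * y s * deriv y s) / ((y s) ^ 2) ^ 2)
            + (16 / a₀) * (-(deriv y s) / (y s) ^ 2)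
          = 2 * deriv y s * ((deriv (deriv y) s - ℓ / (y s) ^ 3) - (8 / a₀) / (y s) ^ 2) := by
        field_simp
        ring
      rw [key]
      have hfact : 0 ≤ (-(deriv y s)) *
          (-((deriv (deriv y) s - ℓ / (y s) ^ 3) - (8 / a₀) / (y s) ^ 2)) :=
        mul_nonneg (by linarith) (by linarith)
      linarith [hfact]
  have h0mem : (0:ℝ) ∈ Set.Icc (0:ℝ) c := ⟨le_rfl, hc0⟩
  have hcmem : c ∈ Set.Icc (0:ℝ) c := ⟨hc0, le_rfl⟩
  -- evaluate at endpoints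
  have hE0 : E 0 = w ^ 2 + ℓ * (r ^ 2)⁻¹ := by simp only [hEdef, h0, h0']
  have hF0 : F 0 = w ^ 2 + ℓ * (r ^ 2)⁻¹ + (16 / a₀) * r⁻¹ := by
    simp only [hFdef, hE0, h0]
  have hFc : F c = ℓ * ((y c) ^ 2)⁻¹ + (16 / a₀) * (y c)⁻¹ := by
    simp only [hFdef, hEdef, hczero]
    norm_num
  have hFF : F 0 ≤ F c := hFmono h0mem hcmem hc0
  have hyc : 0 < y c := hypos c hc0
  -- step: y c < 4 ε²
  have hsmall : y c < 4 * ε ^ 2 := by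
    by_contra h
    push_neg at h
    have h4e : (0:ℝ) < 4 * ε ^ 2 := by positivity
    have hb1 : ((y c) ^ 2)⁻¹ ≤ ((4 * ε ^ 2) ^ 2)⁻¹ := by
      apply inv_anti₀ (by positivity)
      exact pow_le_pow_left₀ h4e.le h 2
    have hb2 : (y c)⁻¹ ≤ (4 * ε ^ 2)⁻¹ := inv_anti₀ h4e h
    have hw2' : w ^ 2 ≤ ℓ * ((4 * ε ^ 2) ^ 2)⁻¹ + (16 / a₀) * (4 * ε ^ 2)⁻¹ := by
      have hp1 : 0 < ℓ * (r ^ 2)⁻¹ := by positivity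
      have hp2 : 0 < (16 / a₀) * r⁻¹ := by positivity
      have hb1' : ℓ * ((y c) ^ 2)⁻¹ ≤ ℓ * ((4 * ε ^ 2) ^ 2)⁻¹ :=
        mul_le_mul_of_nonneg_left hb1 hℓ.le
      have hb2' : (16 / a₀) * (y c)⁻¹ ≤ (16 / a₀) * (4 * ε ^ 2)⁻¹ :=
        mul_le_mul_of_nonneg_left hb2 (by positivity)
      rw [hF0, hFc] at hFF
      linarith
    -- clear denominators: 16 u² ≤ ℓ a₀² + 64 a₀ ε²
    have hkey : 16 * u ^ 2 ≤ ℓ * a₀ ^ 2 + 64 * a₀ * ε ^ 2 := by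
      have e4 : ((4 * ε ^ 2) ^ 2)⁻¹ * (16 * (a₀ ^ 2 * ε ^ 4)) = a₀ ^ 2 := by
        field_simp; ring
      have e5 : (4 * ε ^ 2)⁻¹ * (16 * (a₀ ^ 2 * ε ^ 4)) = 4 * a₀ ^ 2 * ε ^ 2 := by
        field_simp; ring
      have e6 : (16 / a₀) * (4 * a₀ ^ 2 * ε ^ 2) = 64 * a₀ * ε ^ 2 := by
        field_simp; ring
      have hmul := mul_le_mul_of_nonneg_right hw2'
        (by positivity : (0:ℝ) ≤ 16 * (a₀ ^ 2 * ε ^ 4))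
      calc 16 * u ^ 2 = w ^ 2 * (16 * (a₀ ^ 2 * ε ^ 4)) := by rw [huw]; ring
        _ ≤ (ℓ * ((4 * ε ^ 2) ^ 2)⁻¹ + (16 / a₀) * (4 * ε ^ 2)⁻¹) * (16 * (a₀ ^ 2 * ε ^ 4)) := hmul
        _ = ℓ * (((4 * ε ^ 2) ^ 2)⁻¹ * (16 * (a₀ ^ 2 * ε ^ 4)))
            + (16 / a₀) * ((4 * ε ^ 2)⁻¹ * (16 * (a₀ ^ 2 * ε ^ 4))) := by ring
        _ = ℓ * a₀ ^ 2 + (16 / a₀) * (4 * a₀ ^ 2 * ε ^ 2) := by rw [e4, e5]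
        _ = ℓ * a₀ ^ 2 + 64 * a₀ * ε ^ 2 := by rw [e6]
    -- numeric contradiction
    have hu2' : 16 * (r - ε ^ 3) ^ 2 < 16 * u ^ 2 := by
      have := pow_lt_pow_left₀ hu2 (by linarith : (0:ℝ) ≤ r - ε ^ 3) (by norm_num : 2 ≠ 0)
      linarith
    exact traj_aux_small a₀ ε r ℓ ha₀ hε0 hε1' hε2 hε3 hrlo hrhi hr hl (by linarith)
  -- speed bound: define M and g
  set M : ℝ := (r + 2 * ε ^ 3) / (a₀ * ε ^ 2) with hMdef
  have hMpos : 0 < M := by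
    apply div_pos (by linarith [pow_pos hε0 3]) (by positivity)
  have hEM : E 0 ≤ M ^ 2 := by
    have hnum : (w ^ 2 + ℓ * (r ^ 2)⁻¹) * (a₀ ^ 2 * ε ^ 4) ≤ (r + 2 * ε ^ 3) ^ 2 := by
      have hXnn : 0 ≤ ℓ * (r ^ 2)⁻¹ * (a₀ ^ 2 * ε ^ 4) := by positivity
      have := traj_aux_num a₀ ε r u (ℓ * (r ^ 2)⁻¹ * (a₀ ^ 2 * ε ^ 4)) hε0 hr hu1 hupos hl4 hXnn
      calc (w ^ 2 + ℓ * (r ^ 2)⁻¹) * (a₀ ^ 2 * ε ^ 4)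
          = u ^ 2 + ℓ * (r ^ 2)⁻¹ * (a₀ ^ 2 * ε ^ 4) := by rw [huw]; ring
        _ ≤ (r + 2 * ε ^ 3) ^ 2 := this
    rw [hE0, hMdef, div_pow]
    rw [le_div_iff₀ (by positivity : (0:ℝ) < (a₀ * ε ^ 2) ^ 2)]
    calc (w ^ 2 + ℓ * (r ^ 2)⁻¹) * (a₀ * ε ^ 2) ^ 2
        = (w ^ 2 + ℓ * (r ^ 2)⁻¹) * (a₀ ^ 2 * ε ^ 4) := by ring
      _ ≤ (r + 2 * ε ^ 3) ^ 2 := hnum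
  have hy'ge : ∀ s ∈ Set.Icc (0:ℝ) c, -M ≤ deriv y s := by
    intro s hs
    have hEs : E s ≤ E 0 := hEanti h0mem hs hs.1
    have hys := hypos s hs.1
    have hEp : 0 < ℓ * ((y s) ^ 2)⁻¹ := by positivity
    have hEe : E s = (deriv y s) ^ 2 + ℓ * ((y s) ^ 2)⁻¹ := rfl
    have hM2 : w ^ 2 + ℓ * (r ^ 2)⁻¹ ≤ M ^ 2 := by rw [← hE0]; exact hEM
    have hEs' : (deriv y s) ^ 2 + ℓ * ((y s) ^ 2)⁻¹ ≤ w ^ 2 + ℓ * (r ^ 2)⁻¹ := by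
      rw [← hEe, ← hE0]; exact hEs
    have hsq : (deriv y s) ^ 2 ≤ M ^ 2 := by linarith
    exact (abs_le_of_sq_le_sq' hsq hMpos.le).1
  -- g monotone
  set g : ℝ → ℝ := fun s => y s + M * s with hgdef
  have hgmono : MonotoneOn g (Set.Icc (0:ℝ) c) := by
    apply monotoneOn_of_deriv_nonneg (convex_Icc 0 c)
    · exact ((hyd.continuous.add (continuous_const.mul continuous_id)).continuousOn)
    · intro s hs
      exact ((hyd s).add (((hasDerivAt_id s).const_mul M).differentiableAt)).differentiableWithinAt
    · intro s hs
      rw [hinterior] at hs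
      have hg' : HasDerivAt g (deriv y s + M) s := by
        have := ((hyd s).hasDerivAt).add ((hasDerivAt_id s).const_mul M)
        simp only [mul_one] at this
        exact this
      rw [hg'.deriv]
      have := hy'ge s ⟨hs.1.le, hs.2.le⟩
      linarith
  have hgg : g 0 ≤ g c := hgmono h0mem hcmem hc0
  have hg0 : g 0 = r := by simp only [hgdef, h0]; ring
  have hgc : g c = y c + M * c := rfl
  have hrle : r ≤ y c + M * c := by rw [← hg0, ← hgc]; exact hgg
  -- final contradiction
  have hMc : M * c ≤ M * T := mul_le_mul_of_nonneg_left hcT hMpos.le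
  have hfin : r < 4 * ε ^ 2 + M * T := by linarith
  have hMT : M * T * (a₀ * ε ^ 2) = (r + 2 * ε ^ 3) * (a₀ * ε ^ 2 - 20 * ε ^ 4) := by
    rw [hT, hMdef]; field_simp
  have hfin2 : (r - 4 * ε ^ 2) * (a₀ * ε ^ 2) < (r + 2 * ε ^ 3) * (a₀ * ε ^ 2 - 20 * ε ^ 4) := by
    rw [← hMT]
    have := mul_lt_mul_of_pos_right (show r - 4 * ε ^ 2 < M * T by linarith)
      (show (0:ℝ) < a₀ * ε ^ 2 by positivity)
    linarith
  exact traj_aux_final a₀ ε r ha₀ hε0 hε1' hrlo hfin2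
end

section
/- Under the stated parameter choices and support conditions, every such trajectory y satisfies y(T) ≤ 100·ε², where T = a₀·ε² − 20·ε⁴. -/
open Set

private lemma aux_sq {r a₀ : ℝ} (hr : 0 < r) (h : r < 21 * a₀ / 20) :
    r ^ 2 < (441/400) * a₀ ^ 2 := by nlinarith

private lemma aux_ell {ℓ a₀ ε r : ℝ} (hℓ : 0 < ℓ) (ha₀ : 0 < a₀) (hε0 : 0 < ε)
    (key : ℓ * (a₀ ^ 2 * ε ^ 4) < ε ^ 6 * r ^ 2) (hr2 : r ^ 2 < (441/400) * a₀ ^ 2)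
    (hε1 : ε < 1) : ℓ ≤ (441/400) * ε ^ 2 := by
  nlinarith [mul_pos (pow_pos ha₀ 2) (pow_pos hε0 4), mul_pos hℓ (mul_pos (pow_pos ha₀ 2) (pow_pos hε0 4)),
    pow_pos hε0 2, pow_pos hε0 6, mul_lt_mul_of_pos_left hr2 (pow_pos hε0 6)]

private lemma aux_abs {x c : ℝ} (hc : 0 < c) (h : x ^ 2 < c ^ 2) : -c < x ∧ x < c :=
  ⟨by nlinarith [sq_nonneg (x + c)], by nlinarith [sq_nonneg (x - c)]⟩

private lemma aux_w {a₀ ε r w : ℝ} (ha₀ : 0 < a₀) (hε0 : 0 < ε) (hε1 : ε < 1)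
    (hε2 : ε ^ 2 < a₀ / 20) (hrlo : 19 * a₀ / 20 < r) (hrhi : r < 21 * a₀ / 20)
    (hS1a : r + a₀ * ε ^ 2 * w < ε ^ 3) (hS1b : -(ε ^ 3) < r + a₀ * ε ^ 2 * w) :
    w < 0 ∧ 9/10 ≤ (-w) * ε ^ 2 ∧ (-w) * ε ^ 2 ≤ 11/10 := by
  have he3 : ε ^ 3 < a₀ / 20 := by nlinarith [pow_pos hε0 2]
  have hεp : 0 < ε ^ 2 := by positivity
  refine ⟨by nlinarith [mul_pos ha₀ hεp], by nlinarith [mul_pos ha₀ hεp], by nlinarith [mul_pos ha₀ hεp]⟩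

private lemma aux_h20 {ε w : ℝ} (hε0 : 0 < ε) (hwlo : 9/10 ≤ (-w) * ε ^ 2)
    (hwhi : (-w) * ε ^ 2 ≤ 11/10) :
    18 * ε ^ 2 ≤ 20 * ε ^ 4 * (-w) ∧ 20 * ε ^ 4 * (-w) ≤ 22 * ε ^ 2 := by
  have hεp : 0 < ε ^ 2 := by positivity
  constructor <;> nlinarith [hεp]

private lemma aux_e1core {ℓ ε w L : ℝ} (hε0 : 0 < ε) (hε1 : ε < 1)
    (hA1 : (1377/100) * ε ^ 2 ≤ w ^ 2 * ε ^ 4 * L) (hℓε : ℓ ≤ (441/400) * ε ^ 2) (hℓ : 0 < ℓ) :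
    ℓ ≤ ε ^ 2 * L * (2 * w ^ 2) := by
  have hεp : 0 < ε ^ 2 := by positivity
  have h1 : ε ^ 2 ≤ 1 := by nlinarith
  have h2 : ε ^ 4 ≤ ε ^ 2 := by nlinarith
  nlinarith [hA1, mul_le_mul_of_nonneg_right hℓε hεp.le, hεp, h2]

private lemma aux_Xcore {a₀ ε w r L : ℝ} (hε0 : 0 < ε) (ha₀ : 0 < a₀)
    (hA2 : 8 * (r * ε ^ 2) ≤ a₀ * (w ^ 2 * ε ^ 4 * L)) :
    r ≤ a₀ * ε ^ 2 / 8 * w ^ 2 * L := by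
  have hεp : 0 < ε ^ 2 := by positivity
  nlinarith [hA2, hεp]

private lemma hasDerivAt_congr_fun' {f g : ℝ → ℝ} {v v' x : ℝ} (h : HasDerivAt f v x)
    (hfg : ∀ t, f t = g t) (hv : v = v') : HasDerivAt g v' x := by
  subst hv
  exact h.congr_of_eventuallyEq (Filter.Eventually.of_forall fun t => (hfg t).symm)

set_option maxHeartbeats 1000000 in
/-- Theorem 1 parameter choices: every trajectory starting on the support of the data satisfies
`y(T) ≤ 100 ε²`, where `T = a₀ ε² − 20 ε⁴`. -/
theorem trajectory_small_at_time_T (a₀ ε a₁ δ T : ℝ) (ha₀ : 0 < a₀) (hε0 : 0 < ε)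
    (hε1 : ε < min 1 (a₀ / 4)) (hε2 : ε ^ 2 < a₀ / 20)
    (ha₁ : a₁ = -(ε ^ 2)⁻¹) (hδ : δ = ε ^ 3) (hT : T = a₀ * ε ^ 2 - 20 * ε ^ 4)
    (r w ℓ : ℝ) (hr : 0 < r) (hℓ : 0 < ℓ)
    (hsupp : (r + (a₀ / |a₁|) * w) ^ 2 + ℓ * (r ^ 2)⁻¹ * (a₀ / a₁) ^ 2 < ε ^ 2 / a₁ ^ 2)
    (hshell : a₀ - δ < r ∧ r < a₀ + δ)
    (y : ℝ → ℝ) (hy : ContDiff ℝ 2 y) (hypos : ∀ t, 0 ≤ t → 0 < y t)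
    (hode : ∀ t, 0 ≤ t → 0 ≤ deriv (deriv y) t - ℓ / (y t) ^ 3 ∧
      deriv (deriv y) t - ℓ / (y t) ^ 3 ≤ (8 / a₀) / (y t) ^ 2)
    (h0 : y 0 = r) (h0' : deriv y 0 = w) :
    y T ≤ 100 * ε ^ 2 := by
  -- basic numeric facts
  have hε1a : ε < 1 := lt_of_lt_of_le hε1 (min_le_left _ _)
  have hε1b : ε < a₀ / 4 := lt_of_lt_of_le hε1 (min_le_right _ _)
  have hε2p : (0:ℝ) < ε ^ 2 := by positivity
  have hε4p : (0:ℝ) < ε ^ 4 := by positivity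
  have hcube : (0:ℝ) < ε ^ 3 := by positivity
  have he3 : ε ^ 3 < a₀ / 20 := by nlinarith [hε2, hε1a, hε0, hε2p]
  obtain ⟨hsh1, hsh2⟩ := hshell
  rw [hδ] at hsh1 hsh2
  have hrlo : 19 * a₀ / 20 < r := by linarith
  have hrhi : r < 21 * a₀ / 20 := by linarith
  -- rewrite the support condition
  have ha₁abs : a₀ / |a₁| = a₀ * ε ^ 2 := by
    rw [ha₁, abs_neg, abs_inv, abs_of_pos hε2p, div_eq_mul_inv, inv_inv]
  have hq1 : (a₀ / a₁) ^ 2 = a₀ ^ 2 * ε ^ 4 := by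
    rw [ha₁]; field_simp
  have hq2 : ε ^ 2 / a₁ ^ 2 = ε ^ 6 := by
    rw [ha₁]; field_simp
  rw [ha₁abs, hq1, hq2] at hsupp
  have hpos2 : 0 < ℓ * (r ^ 2)⁻¹ * (a₀ ^ 2 * ε ^ 4) := by positivity
  have hS1 : (r + a₀ * ε ^ 2 * w) ^ 2 < (ε ^ 3) ^ 2 := by
    have : (ε ^ 3) ^ 2 = ε ^ 6 := by ring
    linarith [hpos2, this]
  have hS2 : ℓ * (r ^ 2)⁻¹ * (a₀ ^ 2 * ε ^ 4) < ε ^ 6 := by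
    linarith [sq_nonneg (r + a₀ * ε ^ 2 * w)]
  obtain ⟨hS1b, hS1a⟩ := aux_abs hcube hS1
  obtain ⟨hw0, hwlo, hwhi⟩ := aux_w ha₀ hε0 hε1a hε2 hrlo hrhi hS1a hS1b
  have hwne : w ≠ 0 := ne_of_lt hw0
  have hw2pos : 0 < w ^ 2 := by positivity
  have hT0 : 0 < T := by rw [hT]; nlinarith [hε2, hε2p]
  -- the value L = r + w T
  obtain ⟨L, hLdef⟩ : ∃ L : ℝ, L = r + w * T := ⟨_, rfl⟩
  have hLexp : L = (r + a₀ * ε ^ 2 * w) + 20 * ε ^ 4 * (-w) := by rw [hLdef, hT]; ring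
  obtain ⟨h20, h22⟩ := aux_h20 hε0 hwlo hwhi
  have hε32 : ε ^ 3 ≤ ε ^ 2 := by nlinarith [hε0, hε1a, hε2p]
  have hLlo : 17 * ε ^ 2 ≤ L := by rw [hLexp]; linarith
  have hLhi : L < 23 * ε ^ 2 := by rw [hLexp]; linarith
  have hL0 : 0 < L := by linarith
  -- bound on ℓ
  have key : ℓ * (a₀ ^ 2 * ε ^ 4) < ε ^ 6 * r ^ 2 := by
    have h2 := mul_lt_mul_of_pos_right hS2 (pow_pos hr 2)
    have h3 : ℓ * (r ^ 2)⁻¹ * (a₀ ^ 2 * ε ^ 4) * r ^ 2 = ℓ * (a₀ ^ 2 * ε ^ 4) := by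
      field_simp
    rwa [h3] at h2
  have hr2 : r ^ 2 < (441/400) * a₀ ^ 2 := aux_sq hr hrhi
  have hℓε : ℓ ≤ (441/400) * ε ^ 2 := aux_ell hℓ ha₀ hε0 key hr2 hε1a
  clear hsupp hpos2 hS1 hS2 key hr2 hq1 hq2 ha₁abs ha₁ hδ
  -- smoothness facts
  have hy' : ContDiff ℝ (1 + 1) y := by
    have : ((2:ℕ) : WithTop ℕ∞) = 1 + 1 := by norm_num
    rwa [← this]
  have hyy := contDiff_succ_iff_deriv.mp hy'
  have hdy : Differentiable ℝ y := hyy.1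
  have hdy' : Differentiable ℝ (deriv y) := hyy.2.2.differentiable one_ne_zero
  clear hyy hy'
  -- y'' > 0 for t ≥ 0
  have hy''pos : ∀ t, 0 ≤ t → 0 < deriv (deriv y) t := by
    intro t ht
    have h1 := (hode t ht).1
    have h2 : 0 < ℓ / (y t) ^ 3 := div_pos hℓ (pow_pos (hypos t ht) 3)
    linarith
  -- deriv y is monotone on [0, T]
  have hmono1 : MonotoneOn (deriv y) (Icc 0 T) := by
    apply monotoneOn_of_deriv_nonneg (convex_Icc 0 T) hdy'.continuous.continuousOn
      hdy'.differentiableOn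
    intro x hx
    rw [interior_Icc] at hx
    exact (hy''pos x hx.1.le).le
  have hw_le : ∀ s ∈ Icc (0:ℝ) T, w ≤ deriv y s := by
    intro s hs
    have := hmono1 (left_mem_Icc.mpr hT0.le) hs hs.1
    rwa [h0'] at this
  -- lower bound y(s) ≥ r + w s on [0, T]
  have hlow : ∀ s ∈ Icc (0:ℝ) T, r + w * s ≤ y s := by
    have hm : MonotoneOn (fun t => y t - w * t) (Icc 0 T) := by
      apply monotoneOn_of_deriv_nonneg (convex_Icc 0 T)
        ((hdy.continuous.sub (continuous_const.mul continuous_id)).continuousOn)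
        ((hdy.sub (differentiable_id.const_mul w)).differentiableOn)
      intro x hx
      rw [interior_Icc] at hx
      have hx' : x ∈ Icc (0:ℝ) T := ⟨hx.1.le, hx.2.le⟩
      have hder : HasDerivAt (fun t => y t - w * t) (deriv y x - w * 1) x :=
        (hdy x).hasDerivAt.sub ((hasDerivAt_id x).const_mul w)
      rw [show (y - (fun x => w) * id) = (fun t => y t - w * t) from rfl, hder.deriv]
      have := hw_le x hx'
      linarith
    intro s hs
    have h := hm (left_mem_Icc.mpr hT0.le) hs hs.1
    simp only [h0, mul_zero, sub_zero] at h
    linarith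
  -- positivity of r + w s
  have hApos : ∀ s ∈ Icc (0:ℝ) T, L ≤ r + w * s := by
    intro s hs
    have h := mul_le_mul_of_nonpos_left hs.2 hw0.le
    rw [hLdef]; linarith
  have hAne : ∀ s ∈ Icc (0:ℝ) T, r + w * s ≠ 0 := fun s hs =>
    (lt_of_lt_of_le hL0 (hApos s hs)).ne'
  -- the majorant φ and its derivative φ₁
  obtain ⟨φ, hφdef⟩ : ∃ f : ℝ → ℝ, f = fun t => r + w * t
      + ℓ / (2 * w ^ 2) * ((r + w * t)⁻¹ - r⁻¹) + ℓ / (2 * w * r ^ 2) * t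
      + 8 / a₀ * ((Real.log r - Real.log (r + w * t)) / w ^ 2 + t / (w * r)) := ⟨_, rfl⟩
  obtain ⟨φ₁, hφ₁def⟩ : ∃ f : ℝ → ℝ, f = fun t => w
      + ℓ / (2 * w ^ 2) * (-w / (r + w * t) ^ 2) + ℓ / (2 * w * r ^ 2)
      + 8 / a₀ * (-(w / (r + w * t)) / w ^ 2 + 1 / (w * r)) := ⟨_, rfl⟩
  have hA : ∀ s : ℝ, HasDerivAt (fun t : ℝ => r + w * t) w s := by
    intro s
    simpa using ((hasDerivAt_id s).const_mul w).const_add r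
  have hD1 : ∀ s ∈ Icc (0:ℝ) T, HasDerivAt φ (φ₁ s) s := by
    intro s hs
    have hne := hAne s hs
    have hinv := (hA s).inv hne
    have hlog := (hA s).log hne
    have H := (((hA s).add ((hinv.sub_const r⁻¹).const_mul (ℓ / (2 * w ^ 2)))).add
        ((hasDerivAt_id s).const_mul (ℓ / (2 * w * r ^ 2)))).add
        ((((hlog.const_sub (Real.log r)).div_const (w ^ 2)).add
          ((hasDerivAt_id s).div_const (w * r))).const_mul (8 / a₀))
    refine hasDerivAt_congr_fun' H (fun t => by simp only [hφdef, id_eq, Pi.inv_apply, Pi.pow_apply, Pi.add_apply, Pi.neg_apply, Pi.sub_apply, Pi.mul_apply] <;> ring) ?_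
    simp only [hφ₁def] <;> ring
  have hD2 : ∀ s ∈ Icc (0:ℝ) T, HasDerivAt φ₁
      (ℓ / (r + w * s) ^ 3 + (8 / a₀) / (r + w * s) ^ 2) s := by
    intro s hs
    have hne := hAne s hs
    have hA0 : 0 < r + w * s := lt_of_lt_of_le hL0 (hApos s hs)
    have hinv := (hA s).inv hne
    have hsq := ((hA s).pow 2).inv (pow_ne_zero 2 hne)
    have H := ((((hsq.const_mul (-w)).const_mul (ℓ / (2 * w ^ 2))).const_add w).add_const
        (ℓ / (2 * w * r ^ 2))).add
        ((((hinv.const_mul w).neg.div_const (w ^ 2)).add_const (1 / (w * r))).const_mul (8 / a₀))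
    refine hasDerivAt_congr_fun' H (fun t => by simp only [hφ₁def, Pi.inv_apply, Pi.pow_apply, Pi.add_apply, Pi.neg_apply, Pi.sub_apply, Pi.mul_apply] <;> ring) ?_
    simp only [Pi.pow_apply, Nat.cast_ofNat]
    field_simp
    ring
  -- φ₁ 0 = w and φ 0 = r
  have hφ₁0 : φ₁ 0 = w := by
    rw [hφ₁def]
    simp only [mul_zero, add_zero]
    field_simp
    all_goals ring
  have hφ0 : φ 0 = r := by
    rw [hφdef]
    simp only [mul_zero, add_zero, sub_self, zero_div, zero_mul]
    all_goals field_simp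
  -- D := φ₁ - deriv y is monotone on [0,T], starts at 0
  have hDmono : MonotoneOn (fun s => φ₁ s - deriv y s) (Icc 0 T) := by
    apply monotoneOn_of_deriv_nonneg (convex_Icc 0 T)
    · intro x hx
      exact ((hD2 x hx).continuousAt.sub hdy'.continuous.continuousAt).continuousWithinAt
    · intro x hx
      rw [interior_Icc] at hx
      have hx' : x ∈ Icc (0:ℝ) T := ⟨hx.1.le, hx.2.le⟩
      exact (((hD2 x hx').sub (hdy' x).hasDerivAt).differentiableAt).differentiableWithinAt
    · intro x hx
      rw [interior_Icc] at hx
      have hx' : x ∈ Icc (0:ℝ) T := ⟨hx.1.le, hx.2.le⟩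
      have hder := ((hD2 x hx').sub (hdy' x).hasDerivAt).deriv
      rw [show (fun s => φ₁ s - deriv y s) = φ₁ - deriv y from rfl, hder]
      have hA0 : 0 < r + w * x := lt_of_lt_of_le hL0 (hApos x hx')
      have hyx : 0 < y x := hypos x hx.1.le
      have hAy : r + w * x ≤ y x := hlow x hx'
      have k1 : ℓ / (y x) ^ 3 ≤ ℓ / (r + w * x) ^ 3 := by gcongr
      have k2 : (8 / a₀) / (y x) ^ 2 ≤ (8 / a₀) / (r + w * x) ^ 2 := by
        gcongr
      have := (hode x hx.1.le).2
      linarith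
  have hDge : ∀ s ∈ Icc (0:ℝ) T, 0 ≤ φ₁ s - deriv y s := by
    intro s hs
    have := hDmono (left_mem_Icc.mpr hT0.le) hs hs.1
    simpa [hφ₁0, h0'] using this
  -- E := φ - y is monotone on [0,T]
  have hEmono : MonotoneOn (fun s => φ s - y s) (Icc 0 T) := by
    apply monotoneOn_of_deriv_nonneg (convex_Icc 0 T)
    · intro x hx
      exact ((hD1 x hx).continuousAt.sub (hdy.continuous.continuousAt)).continuousWithinAt
    · intro x hx
      rw [interior_Icc] at hx
      have hx' : x ∈ Icc (0:ℝ) T := ⟨hx.1.le, hx.2.le⟩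
      exact (((hD1 x hx').sub (hdy x).hasDerivAt).differentiableAt).differentiableWithinAt
    · intro x hx
      rw [interior_Icc] at hx
      have hx' : x ∈ Icc (0:ℝ) T := ⟨hx.1.le, hx.2.le⟩
      have hder := ((hD1 x hx').sub (hdy x).hasDerivAt).deriv
      rw [show (fun s => φ s - y s) = φ - y from rfl, hder]
      have := hDge x hx'
      linarith
  have hfinal : y T ≤ φ T := by
    have h := hEmono (left_mem_Icc.mpr hT0.le) (right_mem_Icc.mpr hT0.le) hT0.le
    have h' : φ 0 - y 0 ≤ φ T - y T := h
    rw [hφ0, h0] at h'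
    linarith
  -- estimate φ T
  have hwr : w * r < 0 := mul_neg_of_neg_of_pos hw0 hr
  have hlog : Real.log r - Real.log L ≤ r / L := by
    have h₁ : Real.log r - Real.log L = Real.log (r / L) := (Real.log_div hr.ne' hL0.ne').symm
    have h₂ := Real.log_le_sub_one_of_pos (div_pos hr hL0)
    have h₃ : (0:ℝ) < r / L := div_pos hr hL0
    linarith [h₁ ▸ h₂]
  have hw2 : 81/100 ≤ w ^ 2 * ε ^ 4 := by nlinarith [hwlo, mul_le_mul hwlo hwlo (by norm_num) (by positivity : (0:ℝ) ≤ -w * ε ^ 2)]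
  have hA1 : (1377/100) * ε ^ 2 ≤ w ^ 2 * ε ^ 4 * L := by
    have h := mul_le_mul hw2 hLlo (by positivity) (le_trans (by norm_num) hw2)
    linarith [h]
  have hA2 : 8 * (r * ε ^ 2) ≤ a₀ * (w ^ 2 * ε ^ 4 * L) := by
    have h1 := mul_le_mul_of_nonneg_left hA1 ha₀.le
    have h2 := mul_lt_mul_of_pos_right hrhi hε2p
    nlinarith [h1, h2, mul_pos ha₀ hε2p]
  -- term bounds
  have e1 : ℓ / (2 * w ^ 2) * (L⁻¹ - r⁻¹) ≤ ε ^ 2 := by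
    have h1 : L⁻¹ - r⁻¹ ≤ L⁻¹ := sub_le_self _ (inv_nonneg.mpr hr.le)
    have hc : 0 ≤ ℓ / (2 * w ^ 2) := by positivity
    have h2 : ℓ / (2 * w ^ 2) * L⁻¹ ≤ ε ^ 2 := by
      rw [← div_eq_mul_inv, div_le_iff₀ hL0, div_le_iff₀ (by positivity : (0:ℝ) < 2 * w ^ 2)]
      exact aux_e1core hε0 hε1a hA1 hℓε hℓ
    calc ℓ / (2 * w ^ 2) * (L⁻¹ - r⁻¹) ≤ ℓ / (2 * w ^ 2) * L⁻¹ :=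
          mul_le_mul_of_nonneg_left h1 hc
      _ ≤ ε ^ 2 := h2
  have e2 : ℓ / (2 * w * r ^ 2) * T ≤ 0 := by
    have hX : ℓ / (2 * w * r ^ 2) ≤ 0 :=
      div_nonpos_iff.mpr (Or.inl ⟨hℓ.le, by nlinarith⟩)
    exact mul_nonpos_iff.mpr (Or.inr ⟨hX, hT0.le⟩)
  have e3 : 8 / a₀ * ((Real.log r - Real.log L) / w ^ 2 + T / (w * r)) ≤ ε ^ 2 := by
    have t0 : T / (w * r) ≤ 0 := div_nonpos_iff.mpr (Or.inl ⟨hT0.le, hwr.le⟩)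
    have t1 : (Real.log r - Real.log L) / w ^ 2 ≤ (r / L) / w ^ 2 := by gcongr
    have hX : (r / L) / w ^ 2 ≤ a₀ * ε ^ 2 / 8 := by
      rw [div_le_iff₀ hw2pos, div_le_iff₀ hL0]
      exact aux_Xcore hε0 ha₀ hA2
    calc 8 / a₀ * ((Real.log r - Real.log L) / w ^ 2 + T / (w * r))
        ≤ 8 / a₀ * ((r / L) / w ^ 2) := by
          apply mul_le_mul_of_nonneg_left _ (by positivity)
          linarith
      _ ≤ 8 / a₀ * (a₀ * ε ^ 2 / 8) := mul_le_mul_of_nonneg_left hX (by positivity)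
      _ = ε ^ 2 := by field_simp
  have hφT : φ T ≤ 100 * ε ^ 2 := by
    have hφTval : φ T = L + ℓ / (2 * w ^ 2) * (L⁻¹ - r⁻¹) + ℓ / (2 * w * r ^ 2) * T
        + 8 / a₀ * ((Real.log r - Real.log L) / w ^ 2 + T / (w * r)) := by
      simp only [hφdef, hLdef]
    rw [hφTval]
    linarith [e1, e2, e3, hLhi, hε2p]
  linarith [hfinal, hφT]
end
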